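/- Let -1 < α < β < 1, k = sqrt(2(β-α)/((1-α)(1+β))), k' = √(1-k²), dnρ = sqrt((1+α)/(1+β)), cn²ρ = (1+α)/2, sn²ρ = (1-α)/2. Then (1+β)/(2(1+α)) · ((√k' + dnρ)/(1 + √k'))⁴ = (1/2)·(((1-α²)^(1/4) + (1-β²)^(1/4)) / (((1-α)(1+β))^(1/4) + ((1+α)(1-β))^(1/4)))⁴. -/

import Mathlib

/-! Put `u, v, w, z` for the fourth roots of `1 + α, 1 - α, 1 + β, 1 - β`. Since
`1 - k² = (1 + α)(1 - β) / ((1 - α)(1 + β))`, we get `√k' = u z / (v w)` and `dnρ = u² / w²`,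
and both sides become the same rational function of `u, v, w, z`. -/

open Real

lemma Real.sqrt_sqrt_eq_rpow_quarter {x : ℝ} (hx : 0 ≤ x) : √(√x) = x ^ (1 / 4 : ℝ) := by
  rw [sqrt_eq_rpow, sqrt_eq_rpow, ← rpow_mul hx]
  norm_num

lemma Real.rpow_quarter_pow_four {x : ℝ} (hx : 0 ≤ x) : (x ^ (1 / 4 : ℝ)) ^ 4 = x := by
  rw [← sqrt_sqrt_eq_rpow_quarter hx, show (4 : ℕ) = 2 * 2 from rfl, pow_mul,
    sq_sqrt (sqrt_nonneg x), sq_sqrt hx]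

lemma one_sub_sq_sqrt_modulus {α β : ℝ} (hαβ : α ≤ β) (hα : α < 1) (hβ : -1 < β) :
    1 - √(2 * (β - α) / ((1 - α) * (1 + β))) ^ 2 = (1 + α) * (1 - β) / ((1 - α) * (1 + β)) := by
  have hden : 0 < (1 - α) * (1 + β) := mul_pos (by linarith) (by linarith)
  rw [sq_sqrt (div_nonneg (by linarith) hden.le)]
  rw [eq_div_iff hden.ne', sub_mul, div_mul_cancel₀ _ hden.ne']
  ring

lemma fourth_root_form_identity {u v w z : ℝ} (hu : u ≠ 0) (hv : v ≠ 0) (hw : w ≠ 0)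
    (hd : v * w + u * z ≠ 0) :
    w ^ 4 / (2 * u ^ 4) * ((u * z / (v * w) + u ^ 2 / w ^ 2) / (1 + u * z / (v * w))) ^ 4
      = 1 / 2 * ((v * u + z * w) / (v * w + u * z)) ^ 4 := by
  have hd' : v * w + u * z = v * w * (1 + u * z / (v * w)) := by field_simp
  have h1 : 1 + u * z / (v * w) ≠ 0 := fun h ↦ hd (by rw [hd', h, mul_zero])
  field_simp
  ring

theorem stmt_19 (α β k k' dnρ : ℝ) (h1 : -1 < α) (h2 : α < β) (h3 : β < 1)
    (hk : k = Real.sqrt (2 * (β - α) / ((1 - α) * (1 + β))))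
    (hk' : k' = Real.sqrt (1 - k ^ 2))
    (hdn : dnρ = Real.sqrt ((1 + α) / (1 + β))) :
    (1 + β) / (2 * (1 + α)) * ((Real.sqrt k' + dnρ) / (1 + Real.sqrt k')) ^ 4
      = (1/2) * (((1 - α ^ 2) ^ ((1 : ℝ)/4) + (1 - β ^ 2) ^ ((1 : ℝ)/4)) /
        (((1 - α) * (1 + β)) ^ ((1 : ℝ)/4) + ((1 + α) * (1 - β)) ^ ((1 : ℝ)/4))) ^ 4 := by
  have ha1 : 0 < 1 + α := by linarith
  have ha2 : 0 < 1 - α := by linarith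
  have hb1 : 0 < 1 + β := by linarith
  have hb2 : 0 < 1 - β := by linarith
  have hsqrt_k' : √k' = (1 + α) ^ (1 / 4 : ℝ) * (1 - β) ^ (1 / 4 : ℝ)
      / ((1 - α) ^ (1 / 4 : ℝ) * (1 + β) ^ (1 / 4 : ℝ)) := by
    rw [hk', hk, one_sub_sq_sqrt_modulus h2.le (by linarith) (by linarith),
      sqrt_sqrt_eq_rpow_quarter (by positivity), div_rpow (by positivity) (by positivity),
      mul_rpow ha1.le hb2.le, mul_rpow ha2.le hb1.le]
  have hdn' : dnρ = ((1 + α) ^ (1 / 4 : ℝ)) ^ 2 / ((1 + β) ^ (1 / 4 : ℝ)) ^ 2 := by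
    rw [hdn, ← sq_sqrt (sqrt_nonneg _), sqrt_sqrt_eq_rpow_quarter (div_nonneg ha1.le hb1.le),
      div_rpow ha1.le hb1.le, div_pow]
  rw [hsqrt_k', hdn', show 1 - α ^ 2 = (1 - α) * (1 + α) by ring,
    show 1 - β ^ 2 = (1 - β) * (1 + β) by ring, mul_rpow ha2.le ha1.le, mul_rpow hb2.le hb1.le,
    mul_rpow ha2.le hb1.le, mul_rpow ha1.le hb2.le]
  nth_rw 1 [← rpow_quarter_pow_four hb1.le, ← rpow_quarter_pow_four ha1.le]
  exact fourth_root_form_identity (by positivity) (by positivity) (by positivity) (by positivity)
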